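/- arXiv:2403.13748 — 5 statements merged into one kernel-verified Lean document; each statement's English description precedes it below -/
import Mathlib

section
/- If Σ and Ψ are n×n positive definite real matrices, Ψ is diagonal, Σ is not diagonal, and the diagonal entries of Ψ⁻¹ equal those of Σ⁻¹, then det(Ψ) < det(Σ). -/
/-!
With `P = Σ⁻¹`, precision matching gives `∏ i, P i i = det Ψ⁻¹`, so the claim is the strict
Hadamard inequality `det P < ∏ i, P i i` for the positive definite, non-diagonal `P`.
Rescaling `P` on both sides by `diag (P i i)^(-1/2)` yields a positive definite matrix with unit
diagonal other than `1`: its eigenvalues are positive with mean `1` and not all equal to `1`,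
so their product is `< 1` by `log x ≤ x - 1`, with equality only at `x = 1`.
-/

open Matrix Finset

lemma Real.prod_lt_one_of_sum_eq_card {ι : Type*} [Fintype ι] {x : ι → ℝ}
    (hpos : ∀ i, 0 < x i) (hsum : ∑ i, x i = Fintype.card ι) (hne : x ≠ 1) :
    ∏ i, x i < 1 := by
  obtain ⟨j, hj⟩ := Function.ne_iff.mp hne
  have hlog : ∑ i, Real.log (x i) < ∑ i, (x i - 1) :=
    Finset.sum_lt_sum (fun i _ => Real.log_le_sub_one_of_pos (hpos i))
      ⟨j, mem_univ j, Real.log_lt_sub_one_of_pos (hpos j) hj⟩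
  rw [← Real.log_neg_iff (prod_pos fun i _ => hpos i), Real.log_prod fun i _ => (hpos i).ne']
  simpa [sum_sub_distrib, hsum] using hlog

namespace Matrix

variable {ι : Type*} [Fintype ι] [DecidableEq ι]

lemma IsDiag.inv {α : Type*} [CommRing α] {A : Matrix ι ι α} (hA : A.IsDiag) : A⁻¹.IsDiag := by
  rw [← hA.diagonal_diag, inv_diagonal]
  exact isDiag_diagonal _

lemma IsDiag.det_eq_prod_diag {α : Type*} [CommRing α] {A : Matrix ι ι α} (hA : A.IsDiag) :
    A.det = ∏ i, A i i := by
  conv_lhs => rw [← hA.diagonal_diag, det_diagonal]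
  rfl

lemma IsHermitian.eq_one_of_eigenvalues_eq_one {𝕜 : Type*} [RCLike 𝕜] {A : Matrix ι ι 𝕜}
    (hA : A.IsHermitian) (h : hA.eigenvalues = 1) : A = 1 := by
  rw [hA.spectral_theorem, h]
  simp

variable {A : Matrix ι ι ℝ}

lemma PosDef.det_lt_one_of_trace_eq_card (hA : A.PosDef) (htr : A.trace = Fintype.card ι)
    (hne : A ≠ 1) : A.det < 1 := by
  rw [hA.1.det_eq_prod_eigenvalues]
  refine Real.prod_lt_one_of_sum_eq_card hA.eigenvalues_pos ?_
    fun h => hne (hA.1.eq_one_of_eigenvalues_eq_one h)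
  simpa [hA.1.trace_eq_sum_eigenvalues] using htr

lemma PosDef.diagonal_mul_mul_diagonal (hA : A.PosDef) {d : ι → ℝ} (hd : ∀ i, d i ≠ 0) :
    (diagonal d * A * diagonal d).PosDef := by
  have hinj : Function.Injective (diagonal d).mulVec := fun x y hxy => by
    funext i
    simpa [mulVec_diagonal, hd i] using congrFun hxy i
  simpa [diagonal_conjTranspose] using hA.conjTranspose_mul_mul_same hinj

theorem PosDef.det_lt_prod_diag (hA : A.PosDef) (hA_not_diag : ¬ A.IsDiag) : A.det < ∏ i, A i i := by
  set d : ι → ℝ := fun i => (√(A i i))⁻¹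
  have hd : ∀ i, d i ≠ 0 := fun i => inv_ne_zero (Real.sqrt_pos.2 hA.diag_pos).ne'
  have hd_sq : ∀ i, d i * d i = (A i i)⁻¹ := fun i => by
    rw [← mul_inv, Real.mul_self_sqrt hA.diag_pos.le]
  set M := diagonal d * A * diagonal d
  have hM_apply : ∀ i j, M i j = d i * A i j * d j := fun i j => by
    simp [M, mul_diagonal, diagonal_mul]
  have hM_diag : ∀ i, M i i = 1 := fun i => by
    rw [hM_apply, mul_right_comm, hd_sq, inv_mul_cancel₀ hA.diag_pos.ne']
  have hM_trace : M.trace = Fintype.card ι := by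
    simp [trace, hM_diag]
  have hM_ne : M ≠ 1 := fun h => hA_not_diag fun i j hij => by
    simpa [hM_apply, hd, one_apply_ne hij] using congrFun (congrFun h i) j
  have hM_det : M.det = A.det * (∏ i, A i i)⁻¹ := by
    simp only [M, det_mul, det_diagonal, ← prod_inv_distrib, ← hd_sq, prod_mul_distrib]
    ring
  have hprod_pos : 0 < ∏ i, A i i := prod_pos fun i _ => hA.diag_pos
  have := (hA.diagonal_mul_mul_diagonal hd).det_lt_one_of_trace_eq_card hM_trace hM_ne
  rwa [hM_det, ← div_eq_mul_inv, div_lt_one hprod_pos] at this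

end Matrix

theorem precision_matching_underestimates_generalized_variance_general
    (n : ℕ) (S Ψ : Matrix (Fin n) (Fin n) ℝ)
    (hS : S.PosDef)
    (hΨdiag : Ψ.IsDiag) (hSnotdiag : ¬ S.IsDiag)
    (hmatch : ∀ i, Ψ⁻¹ i i = S⁻¹ i i) :
    Ψ.det < S.det := by
  have hSinv_not_diag : ¬ S⁻¹.IsDiag := fun h => hSnotdiag <| by
    simpa [nonsing_inv_nonsing_inv S hS.det_pos.ne'.isUnit] using h.inv
  have hinv_lt : S.det⁻¹ < Ψ.det⁻¹ := by
    simp only [← Ring.inverse_eq_inv', ← det_nonsing_inv]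
    calc S⁻¹.det < ∏ i, S⁻¹ i i := hS.inv.det_lt_prod_diag hSinv_not_diag
      _ = ∏ i, Ψ⁻¹ i i := by simp_rw [hmatch]
      _ = Ψ⁻¹.det := hΨdiag.inv.det_eq_prod_diag.symm
  have hS_inv_pos : 0 < S.det⁻¹ := inv_pos.2 hS.det_pos
  have hΨ_pos : 0 < Ψ.det := inv_pos.1 (hS_inv_pos.trans hinv_lt)
  exact (inv_lt_inv₀ hS.det_pos hΨ_pos).1 hinv_lt

theorem precision_matching_underestimates_generalized_variance
    (n : ℕ) (S Ψ : Matrix (Fin n) (Fin n) ℝ)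
    (hS : S.PosDef) (hΨ : Ψ.PosDef)
    (hΨdiag : Ψ.IsDiag) (hSnotdiag : ¬ S.IsDiag)
    (hmatch : ∀ i, Ψ⁻¹ i i = S⁻¹ i i) :
    Ψ.det < S.det :=
  precision_matching_underestimates_generalized_variance_general n S Ψ hS hΨdiag hSnotdiag hmatch
end

section
/- For any n×n real positive definite matrix A and index j such that the j-th row of A has a nonzero off-diagonal entry, A_{jj} · (A⁻¹)_{jj} > 1. -/
/-!
Let `e = Pi.single j 1` and `x = A⁻¹ *ᵥ e`. For the inner product `⟨u, v⟩ = u ⬝ᵥ A *ᵥ v` we have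
`⟨e, x⟩ = 1`, `⟨e, e⟩ = A j j` and `⟨x, x⟩ = A⁻¹ j j`, so Cauchy–Schwarz gives `1 ≤ A j j * A⁻¹ j j`.
Equality would force `e` and `x` to be parallel, i.e. `A *ᵥ e` to be a multiple of `e`, which the
nonzero off-diagonal entry in column `j` (equivalently, by symmetry, row `j`) rules out.
-/

namespace Matrix

variable {ι : Type*} [Fintype ι]

theorem IsSymm.dotProduct_mulVec_comm {R : Type*} [CommSemiring R] {A : Matrix ι ι R}
    (hA : A.IsSymm) (x y : ι → R) : x ⬝ᵥ A *ᵥ y = y ⬝ᵥ A *ᵥ x := by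
  rw [← dotProduct_transpose_mulVec, hA.eq]

theorem PosDef.sq_dotProduct_mulVec_lt {A : Matrix ι ι ℝ} (hA : A.PosDef) {x y : ι → ℝ}
    (hxy : LinearIndependent ℝ ![x, y]) :
    (x ⬝ᵥ A *ᵥ y) ^ 2 < (x ⬝ᵥ A *ᵥ x) * (y ⬝ᵥ A *ᵥ y) := by
  have hsymm : A.IsSymm := isHermitian_iff_isSymm.mp hA.isHermitian
  set a := x ⬝ᵥ A *ᵥ x
  set b := x ⬝ᵥ A *ᵥ y
  have ha : 0 < a := by
    simpa using hA.dotProduct_mulVec_pos (hxy.ne_zero 0)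
  have hz : b • x - a • y ≠ 0 := by
    intro h
    rw [sub_eq_add_neg, ← neg_smul] at h
    exact ha.ne' (neg_eq_zero.mp (LinearIndependent.pair_iff.mp hxy _ _ h).2)
  -- the form at `b • x - a • y` equals `a * (a * (y ⬝ᵥ A *ᵥ y) - b ^ 2)`
  have hpos := hA.dotProduct_mulVec_pos hz
  simp only [star_trivial, mulVec_sub, mulVec_smul, sub_dotProduct, dotProduct_sub,
    smul_dotProduct, dotProduct_smul, smul_eq_mul, hsymm.dotProduct_mulVec_comm y x] at hpos
  nlinarith

theorem linearIndependent_single_inv_mulVec_single {K : Type*} [Field K] [DecidableEq ι]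
    {A : Matrix ι ι K} (hA : IsUnit A.det) {j k : ι} (hkj : k ≠ j) (hAkj : A k j ≠ 0) :
    LinearIndependent K ![Pi.single j 1, A⁻¹ *ᵥ Pi.single j 1] := by
  refine LinearIndependent.pair_iff.mpr fun s t hst => ?_
  have hA_st : s • A *ᵥ Pi.single j 1 + t • Pi.single j 1 = 0 := by
    simpa only [mulVec_add, mulVec_smul, mulVec_mulVec, mul_nonsing_inv _ hA, one_mulVec,
      mulVec_zero] using congrArg (A *ᵥ ·) hst
  have hs : s = 0 := by
    simpa [hkj, hAkj] using congrFun hA_st k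
  subst hs
  simpa using congrFun hA_st j

end Matrix

open Matrix in
theorem diag_mul_inv_diag_gt_one
    (n : ℕ) (A : Matrix (Fin n) (Fin n) ℝ) (hA : A.PosDef) (j : Fin n)
    (hrow : ∃ k, k ≠ j ∧ A j k ≠ 0) :
    1 < A j j * A⁻¹ j j := by
  obtain ⟨k, hkj, hAjk⟩ := hrow
  have hdet : IsUnit A.det := (isUnit_iff_isUnit_det A).mp hA.isUnit
  have hAkj : A k j ≠ 0 := by
    rwa [(isHermitian_iff_isSymm.mp hA.isHermitian).apply]
  have hCS := hA.sq_dotProduct_mulVec_lt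
    (linearIndependent_single_inv_mulVec_single hdet hkj hAkj)
  have hAx : A *ᵥ (A⁻¹ *ᵥ Pi.single j 1) = Pi.single j 1 := by
    rw [mulVec_mulVec, mul_nonsing_inv _ hdet, one_mulVec]
  rw [hAx, single_one_dotProduct, dotProduct_single_one, Pi.single_eq_same, mulVec_single_one,
    single_one_dotProduct, mulVec_single_one] at hCS
  simpa only [one_pow, col_apply] using hCS
end

section
/- If Σ and Ψ are n×n positive definite matrices with Ψ diagonal, Σ not diagonal, and Ψ_{ii} = Σ_{ii} for all i, then (Ψ⁻¹)_{ii} ≤ (Σ⁻¹)_{ii} for all i, with strict inequality for at least one i. -/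
/-!
For a diagonal `Ψ` matching the diagonal of `S`, `(Ψ⁻¹)ᵢᵢ = 1 / Sᵢᵢ`, so the claim is
`1 ≤ Sᵢᵢ (S⁻¹)ᵢᵢ`, strictly when column `i` of `S` has a nonzero off-diagonal entry. Both
follow from evaluating the quadratic form of `S` at `w = eᵢ - Sᵢᵢ S⁻¹eᵢ`: it equals
`Sᵢᵢ (Sᵢᵢ (S⁻¹)ᵢᵢ - 1)`, and `S w = S eᵢ - Sᵢᵢ eᵢ` vanishes only if column `i` of `S` is a
multiple of `eᵢ`.
-/

namespace Matrix

variable {ι : Type*} [Fintype ι] [DecidableEq ι]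

lemma IsDiag.inv_apply_self {K : Type*} [Field K] {A : Matrix ι ι K} (hA : A.IsDiag)
    (hA₀ : ∀ i, A i i ≠ 0) (i : ι) : A⁻¹ i i = (A i i)⁻¹ := by
  have hinv : A⁻¹ = diagonal fun j => (A j j)⁻¹ := by
    refine inv_eq_right_inv ?_
    nth_rw 1 [← hA.diagonal_diag]
    rw [diagonal_mul_diagonal]
    exact (congrArg diagonal (funext fun j => mul_inv_cancel₀ (hA₀ j))).trans diagonal_one
  simp [hinv]

variable {S : Matrix ι ι ℝ}

lemma mulVec_single_sub_smul_inv_col (hdet : IsUnit S.det) (i : ι) :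
    S *ᵥ (Pi.single i 1 - S i i • S⁻¹.col i) = S.col i - S i i • Pi.single i 1 := by
  rw [mulVec_sub, mulVec_smul, ← mulVec_single_one S⁻¹, mulVec_mulVec, mul_nonsing_inv S hdet,
    one_mulVec, mulVec_single_one]

lemma dotProduct_mulVec_single_sub_smul_inv_col (hS : S.IsSymm) (hdet : IsUnit S.det) (i : ι) :
    (Pi.single i 1 - S i i • S⁻¹.col i) ⬝ᵥ (S *ᵥ (Pi.single i 1 - S i i • S⁻¹.col i)) =
      S i i * (S i i * S⁻¹ i i - 1) := by
  have hcol : S⁻¹.col i ⬝ᵥ S.col i = 1 := by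
    rw [dotProduct_comm]
    have := congrFun (congrFun (mul_nonsing_inv S hdet) i) i
    rw [mul_apply] at this
    simpa [dotProduct, col, ← hS.apply i] using this
  rw [mulVec_single_sub_smul_inv_col hdet, sub_dotProduct, dotProduct_sub, dotProduct_sub,
    smul_dotProduct, smul_dotProduct, dotProduct_smul, dotProduct_smul, hcol]
  simp [single_dotProduct, dotProduct_single, col]
  ring

lemma PosDef.inv_diag_le_diag_inv (hS : S.PosDef) (i : ι) : (S i i)⁻¹ ≤ S⁻¹ i i := by
  have hsymm : S.IsSymm := isHermitian_iff_isSymm.mp hS.isHermitian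
  have hq := hS.posSemidef.dotProduct_mulVec_nonneg (Pi.single i 1 - S i i • S⁻¹.col i)
  rw [star_trivial, dotProduct_mulVec_single_sub_smul_inv_col hsymm hS.det_pos.ne'.isUnit,
    mul_nonneg_iff_of_pos_left hS.diag_pos] at hq
  rw [inv_le_iff_one_le_mul₀ hS.diag_pos]
  linarith

lemma PosDef.inv_diag_lt_diag_inv (hS : S.PosDef) {i j : ι} (hji : j ≠ i) (hSji : S j i ≠ 0) :
    (S i i)⁻¹ < S⁻¹ i i := by
  have hsymm : S.IsSymm := isHermitian_iff_isSymm.mp hS.isHermitian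
  have hdet : IsUnit S.det := hS.det_pos.ne'.isUnit
  have hw : Pi.single i 1 - S i i • S⁻¹.col i ≠ 0 := by
    intro hw
    have hj := congrFun (mulVec_single_sub_smul_inv_col hdet i) j
    exact hSji (by simpa [hw, hji] using hj.symm)
  have hq := hS.dotProduct_mulVec_pos hw
  rw [star_trivial, dotProduct_mulVec_single_sub_smul_inv_col hsymm hdet,
    mul_pos_iff_of_pos_left hS.diag_pos] at hq
  rw [inv_lt_iff_one_lt_mul₀ hS.diag_pos]
  linarith

end Matrix

theorem variance_matching_underestimates_precisions_general
    (n : ℕ) (S Ψ : Matrix (Fin n) (Fin n) ℝ)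
    (hS : S.PosDef)
    (hΨdiag : Ψ.IsDiag) (hSnotdiag : ¬ S.IsDiag)
    (hmatch : ∀ i, Ψ i i = S i i) :
    (∀ i, Ψ⁻¹ i i ≤ S⁻¹ i i) ∧ (∃ i, Ψ⁻¹ i i < S⁻¹ i i) := by
  have hΨinv : ∀ i, Ψ⁻¹ i i = (S i i)⁻¹ := fun i => by
    rw [hΨdiag.inv_apply_self (fun j => hmatch j ▸ hS.diag_pos.ne') i, hmatch]
  obtain ⟨j, i, hji, hSji⟩ : ∃ j i, j ≠ i ∧ S j i ≠ 0 := by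
    simpa [Matrix.IsDiag, Pairwise] using hSnotdiag
  exact ⟨fun i => (hΨinv i).trans_le (hS.inv_diag_le_diag_inv i),
    ⟨i, (hΨinv i).trans_lt (hS.inv_diag_lt_diag_inv hji hSji)⟩⟩

theorem variance_matching_underestimates_precisions
    (n : ℕ) (S Ψ : Matrix (Fin n) (Fin n) ℝ)
    (hS : S.PosDef) (hΨ : Ψ.PosDef)
    (hΨdiag : Ψ.IsDiag) (hSnotdiag : ¬ S.IsDiag)
    (hmatch : ∀ i, Ψ i i = S i i) :
    (∀ i, Ψ⁻¹ i i ≤ S⁻¹ i i) ∧ (∃ i, Ψ⁻¹ i i < S⁻¹ i i) :=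
  variance_matching_underestimates_precisions_general n S Ψ hS hΨdiag hSnotdiag hmatch
end

section
/- Fix α ∈ (0,1) and an n×n positive definite matrix Σ. If a diagonal positive definite matrix Ψ minimizes F(Ψ) = log det(αΨ + (1−α)Σ) − α log det(Ψ) over diagonal positive definite matrices, then (Ψ⁻¹)_{ii} = ((αΨ + (1−α)Σ)⁻¹)_{ii} for all i. -/
/-!
Perturb the `i`-th diagonal entry of `Ψ = diagonal d` by `t`. Along this line the objective is
`log det (Σ_α + diagonal (Pi.single i (α t))) - α log det (Ψ + diagonal (Pi.single i t))`, and
since `det (A + diagonal (Pi.single i t)) = det A + t * adjugate A i i` is affine in `t`, the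
derivative of `t ↦ log det (A + diagonal (Pi.single i t))` at `0` is `adjugate A i i / det A`,
i.e. `A⁻¹ i i`. Minimality forces the derivative `α (Σ_α⁻¹ i i - Ψ⁻¹ i i)` to vanish at `t = 0`.
-/

open Matrix

namespace Matrix

variable {ι : Type*} [Fintype ι] [DecidableEq ι]

theorem det_add_diagonal_single {R : Type*} [CommRing R] (M : Matrix ι ι R) (i : ι) (t : R) :
    (M + diagonal (Pi.single i t)).det = M.det + t * M.adjugate i i := by
  have hrow : M + diagonal (Pi.single i t) = M.updateRow i (M i + t • Pi.single i 1) := by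
    ext j k
    by_cases hj : j = i
    · subst hj
      by_cases hk : k = j
      · subst hk; simp
      · simp [diagonal_apply_ne' _ hk, Pi.single_eq_of_ne hk]
    · simp [hj, diagonal_apply]
  rw [hrow, det_updateRow_add, det_updateRow_smul, updateRow_eq_self, adjugate_apply]

theorem hasDerivAt_log_det_add_diagonal_single (A : Matrix ι ι ℝ) (hA : A.det ≠ 0) (i : ι) :
    HasDerivAt (fun t => Real.log (A + diagonal (Pi.single i t)).det) (A⁻¹ i i) 0 := by
  simp_rw [det_add_diagonal_single]
  have h := (((hasDerivAt_id' (0 : ℝ)).mul_const (A.adjugate i i)).const_add A.det).log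
    (by simpa using hA)
  convert h using 1
  rw [inv_def, smul_apply, Ring.inverse_eq_inv', smul_eq_mul]
  simp [div_eq_inv_mul]

end Matrix

theorem renyi_fixed_point_equation
    (n : ℕ) (α : ℝ) (hα : α ∈ Set.Ioo (0 : ℝ) 1)
    (S : Matrix (Fin n) (Fin n) ℝ) (hS : S.PosDef)
    (d : Fin n → ℝ) (hd : ∀ i, 0 < d i)
    (hmin : ∀ d' : Fin n → ℝ, (∀ i, 0 < d' i) →
      Real.log (α • Matrix.diagonal d + (1 - α) • S).det
        - α * Real.log (Matrix.diagonal d).det ≤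
      Real.log (α • Matrix.diagonal d' + (1 - α) • S).det
        - α * Real.log (Matrix.diagonal d').det) :
    ∀ i, (Matrix.diagonal d)⁻¹ i i
      = (α • Matrix.diagonal d + (1 - α) • S)⁻¹ i i := by
  obtain ⟨hα0, hα1⟩ := hα
  intro i
  set Sα := α • diagonal d + (1 - α) • S
  have hSα : Sα.det ≠ 0 :=
    (((PosDef.diagonal hd).smul hα0).add (hS.smul (sub_pos.mpr hα1))).det_pos.ne'
  have hΨ : (diagonal d).det ≠ 0 := (PosDef.diagonal hd).det_pos.ne'
  have hline : ∀ t, α • diagonal (d + Pi.single i t) + (1 - α) • S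
      = Sα + diagonal (Pi.single i (α * t)) := by
    intro t
    rw [← smul_eq_mul, Pi.single_smul', diagonal_smul, Pi.add_def, ← diagonal_add, smul_add]
    exact add_right_comm _ _ _
  have hlocal : IsLocalMin (fun t => Real.log (Sα + diagonal (Pi.single i (α * t))).det
      - α * Real.log (diagonal d + diagonal (Pi.single i t)).det) 0 := by
    filter_upwards [Ioi_mem_nhds (neg_lt_zero.mpr (hd i))] with t ht
    have hpos : ∀ j, 0 < (d + Pi.single i t : Fin n → ℝ) j := by
      intro j
      by_cases hj : j = i
      · subst hj; simpa [neg_lt_iff_pos_add'] using ht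
      · simpa [Pi.single_eq_of_ne hj] using hd j
    simpa [hline, diagonal_add] using hmin _ hpos
  have hderiv := ((hasDerivAt_log_det_add_diagonal_single Sα hSα i).comp_of_eq 0
    ((hasDerivAt_id 0).const_mul α) (by simp)).sub
    ((hasDerivAt_log_det_add_diagonal_single _ hΨ i).const_mul α)
  have hstationary : α * (Sα⁻¹ i i - (diagonal d)⁻¹ i i) = 0 := by
    linarith [hlocal.hasDerivAt_eq_zero hderiv]
  exact (sub_eq_zero.mp ((mul_eq_zero.mp hstationary).resolve_left hα0.ne')).symm
end

section
/- Fix α ∈ (0,1) and an n×n positive definite matrix Σ. The function F(Ψ) = log det(αΨ + (1−α)Σ) − α log det(Ψ), defined on diagonal positive definite matrices Ψ, tends to +∞ whenever some diagonal entry Ψ_{ii} tends to 0 or to +∞; hence F attains its minimum at some diagonal positive definite Ψ. -/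
/-!
Since `(1 - α) S ≥ c • 1` for some `c > 0` and the determinant is monotone on positive definite
matrices, `F Ψ ≥ ∑ i, (log (α Ψᵢᵢ + c) - α log Ψᵢᵢ)`. Each summand is bounded below and tends to
`+∞` as `Ψᵢᵢ → 0` (it behaves like `-α log Ψᵢᵢ`) and as `Ψᵢᵢ → ∞` (like `(1 - α) log Ψᵢᵢ`).
In the coordinates `Ψᵢᵢ = exp uᵢ` this makes `F` a continuous function on `ℝⁿ` tending to `+∞`
along the cocompact filter, so it attains its minimum.
-/

open Filter Real

namespace Matrix
open scoped MatrixOrder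
variable {n : Type*} [Fintype n] [DecidableEq n]

lemma one_le_det_of_one_le {M : Matrix n n ℝ} (hM : 1 ≤ M) : 1 ≤ M.det := by
  have hMh : M.IsHermitian := IsSelfAdjoint.of_nonneg (zero_le_one.trans hM)
  rw [hMh.det_eq_prod_eigenvalues]
  refine Finset.one_le_prod fun i _ => ?_
  simpa using (algebraMap_le_iff_le_spectrum (r := (1 : ℝ)) hMh).1 (by simpa using hM) _
    (hMh.eigenvalues_mem_spectrum_real i)

lemma det_le_det_of_le {A B : Matrix n n ℝ} (hA : A.PosDef) (hAB : A ≤ B) :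
    A.det ≤ B.det := by
  obtain ⟨R, rfl⟩ := CStarAlgebra.nonneg_iff_eq_star_mul_self.mp hA.posSemidef.nonneg
  have hR : IsUnit R.det := by
    refine isUnit_iff_ne_zero.2 fun h => hA.det_pos.ne' ?_
    rw [det_mul, h, mul_zero]
  -- conjugating `A ≤ B` by `R⁻¹` gives `1 ≤ R⁻ᴴ B R⁻¹`, whose determinant is `det B / det A`
  have hone : star R⁻¹ * (star R * R) * R⁻¹ = 1 := by
    rw [← mul_assoc, ← star_mul, mul_assoc, mul_nonsing_inv _ hR, star_one, one_mul]
  have hdet : (star R⁻¹).det * (star R * R).det * R⁻¹.det = 1 := by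
    rw [← det_mul, ← det_mul, hone, det_one]
  calc (star R * R).det = (star R * R).det * 1 := (mul_one _).symm
    _ ≤ (star R * R).det * (star R⁻¹ * B * R⁻¹).det := by
      gcongr
      · exact hA.det_pos.le
      · exact one_le_det_of_one_le (hone ▸ star_right_conjugate_le_conjugate hAB _)
    _ = B.det := by simp only [det_mul] at hdet ⊢; linear_combination B.det * hdet

lemma PosDef.exists_pos_smul_one_le {S : Matrix n n ℝ} (hS : S.PosDef) :
    ∃ c > (0 : ℝ), c • (1 : Matrix n n ℝ) ≤ S := by
  rcases subsingleton_or_nontrivial (Matrix n n ℝ) with h | h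
  · exact ⟨1, one_pos, le_of_eq (Subsingleton.elim _ _)⟩
  simpa [Algebra.algebraMap_eq_smul_one] using
    (CFC.exists_pos_algebraMap_le_iff hS.isHermitian).2 fun x hx => by
      obtain ⟨i, rfl⟩ := hS.isHermitian.spectrum_real_eq_range_eigenvalues ▸ hx
      exact hS.eigenvalues_pos i

lemma prod_add_le_det_diagonal_add {d : n → ℝ} (hd : ∀ i, 0 ≤ d i) {c : ℝ} (hc : 0 < c)
    {T : Matrix n n ℝ} (hT : c • 1 ≤ T) : ∏ i, (d i + c) ≤ (diagonal d + T).det := by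
  have hdiag : diagonal (fun i => d i + c) = diagonal d + c • 1 := by
    ext i j; by_cases h : i = j <;> simp [h]
  have hpos : (diagonal fun i => d i + c).PosDef := PosDef.diagonal fun i => by linarith [hd i]
  rw [← det_diagonal]
  refine det_le_det_of_le hpos ?_
  rw [hdiag]
  gcongr

end Matrix

lemma tendsto_log_mul_exp_add_sub_mul_cocompact {a b c : ℝ} (ha : 0 < a) (hc : 0 < c)
    (hb₀ : 0 < b) (hb₁ : b < 1) :
    Tendsto (fun u => log (a * exp u + c) - b * u) (cocompact ℝ) atTop := by
  rw [cocompact_eq_atBot_atTop, tendsto_sup]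
  constructor
  · refine tendsto_atTop_mono (fun u => ?_)
      (tendsto_atTop_add_const_left _ (log c) (tendsto_neg_atBot_atTop.comp
        (tendsto_id.const_mul_atBot hb₀)))
    have := log_le_log hc (le_add_of_nonneg_left (mul_pos ha (exp_pos u)).le)
    simp only [Function.comp_apply, id]
    linarith
  · refine tendsto_atTop_mono (fun u => ?_)
      (tendsto_atTop_add_const_left _ (log a) (tendsto_id.const_mul_atTop (sub_pos.2 hb₁)))
    have := log_le_log (mul_pos ha (exp_pos u)) (by linarith : a * exp u ≤ a * exp u + c)
    rw [log_mul ha.ne' (exp_pos u).ne', log_exp] at this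
    simp only [id]
    linarith

lemma Filter.Tendsto.sum_atTop_of_forall_le {ι α : Type*} [Fintype ι]
    {l : Filter α} {f : ι → α → ℝ} {m : ℝ} (hm : ∀ j x, m ≤ f j x) {i : ι}
    (hi : Tendsto (f i) l atTop) : Tendsto (fun x => ∑ j, f j x) l atTop := by
  classical
  simp_rw [← Finset.add_sum_erase _ _ (Finset.mem_univ i)]
  exact tendsto_atTop_add_right_of_le _ _ hi fun x =>
    Finset.sum_le_sum (fun j _ => hm j x)

lemma tendsto_log_cocompact_of_tendsto_zero_or_atTop {α : Type*} {l : Filter α} {f : α → ℝ}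
    (hf : ∀ x, 0 < f x) (h : Tendsto f l (nhds 0) ∨ Tendsto f l atTop) :
    Tendsto (fun x => log (f x)) l (cocompact ℝ) := by
  rw [cocompact_eq_atBot_atTop]
  rcases h with h₀ | h_top
  · exact (tendsto_log_nhdsGT_zero.comp
      (tendsto_nhdsWithin_iff.2 ⟨h₀, Eventually.of_forall hf⟩)).mono_right le_sup_left
  · exact (tendsto_log_atTop.comp h_top).mono_right le_sup_right

open Matrix

/-- The objective `F` in the coordinates `Ψ = diagonal (exp u)`, which identify the positive
diagonal matrices with all of `n → ℝ`. -/
noncomputable def renyiObjectiveLog {n : Type*} [Fintype n] [DecidableEq n] (α : ℝ)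
    (S : Matrix n n ℝ) (u : n → ℝ) : ℝ :=
  log (α • diagonal (fun i => exp (u i)) + (1 - α) • S).det - α * ∑ i, u i

section renyiObjectiveLog

variable {n : Type*} [Fintype n] [DecidableEq n] {α : ℝ} {S : Matrix n n ℝ}

lemma continuous_renyiObjectiveLog (hα₀ : 0 ≤ α) (hα₁ : α < 1) (hS : S.PosDef) :
    Continuous (renyiObjectiveLog α S) := by
  have hpos : ∀ u : n → ℝ, (α • diagonal (fun i => exp (u i)) + (1 - α) • S).PosDef := fun u =>
    PosDef.posSemidef_add ((PosDef.diagonal fun i => exp_pos (u i)).posSemidef.smul hα₀)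
      (hS.smul (sub_pos.2 hα₁))
  have hdet : Continuous fun u : n → ℝ =>
      (α • diagonal (fun i => exp (u i)) + (1 - α) • S).det := by
    fun_prop
  exact (hdet.log fun u => (hpos u).det_pos.ne').sub (by fun_prop)

lemma exists_sum_le_renyiObjectiveLog (hα₀ : 0 ≤ α) (hα₁ : α < 1) (hS : S.PosDef) :
    ∃ c > 0, ∀ u, ∑ i, (log (α * exp (u i) + c) - α * u i) ≤ renyiObjectiveLog α S u := by
  obtain ⟨c, hc, hcS⟩ := (hS.smul (sub_pos.2 hα₁)).exists_pos_smul_one_le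
  refine ⟨c, hc, fun u => ?_⟩
  have hpos : ∀ i, 0 < α * exp (u i) + c := fun i => by positivity
  rw [renyiObjectiveLog, Finset.sum_sub_distrib, ← Finset.mul_sum, ← diagonal_smul,
    ← log_prod fun i _ => (hpos i).ne']
  gcongr
  exact prod_add_le_det_diagonal_add (fun i => by positivity) hc hcS

lemma tendsto_renyiObjectiveLog_comap_eval (hα₀ : 0 < α) (hα₁ : α < 1) (hS : S.PosDef)
    (i : n) : Tendsto (renyiObjectiveLog α S) (comap (Function.eval i) (cocompact ℝ)) atTop := by
  obtain ⟨c, hc, hsum⟩ := exists_sum_le_renyiObjectiveLog hα₀.le hα₁ hS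
  have hg := tendsto_log_mul_exp_add_sub_mul_cocompact hα₀ hc hα₀ hα₁
  obtain ⟨t, ht⟩ := (by fun_prop (disch := intro; positivity) :
    Continuous fun u => log (α * exp u + c) - α * u).exists_forall_le hg
  exact tendsto_atTop_mono hsum <|
    Tendsto.sum_atTop_of_forall_le (fun j u => ht (u j)) (hg.comp tendsto_comap)

lemma tendsto_renyiObjectiveLog_cocompact (hα₀ : 0 < α) (hα₁ : α < 1) (hS : S.PosDef) :
    Tendsto (renyiObjectiveLog α S) (cocompact (n → ℝ)) atTop := by
  rw [← coprodᵢ_cocompact]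
  exact tendsto_iSup.2 (tendsto_renyiObjectiveLog_comap_eval hα₀ hα₁ hS)

end renyiObjectiveLog

theorem renyi_objective_coercive_and_attains_min
    (n : ℕ) (α : ℝ) (hα : α ∈ Set.Ioo (0 : ℝ) 1)
    (S : Matrix (Fin n) (Fin n) ℝ) (hS : S.PosDef)
    (F : (Fin n → ℝ) → ℝ)
    (hF : ∀ d, F d = Real.log (α • Matrix.diagonal d + (1 - α) • S).det
        - α * Real.log (Matrix.diagonal d).det) :
    (∀ d : ℕ → Fin n → ℝ, (∀ k i, 0 < d k i) → ∀ i : Fin n,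
      (Tendsto (fun k => d k i) atTop (nhds 0) ∨
        Tendsto (fun k => d k i) atTop atTop) →
      Tendsto (fun k => F (d k)) atTop atTop) ∧
    (∃ d : Fin n → ℝ, (∀ i, 0 < d i) ∧
      ∀ d' : Fin n → ℝ, (∀ i, 0 < d' i) → F d ≤ F d') := by
  obtain ⟨hα₀, hα₁⟩ := hα
  have hF_exp : ∀ u, F (fun i => exp (u i)) = renyiObjectiveLog α S u := fun u => by
    rw [hF, renyiObjectiveLog, det_diagonal, ← exp_sum, log_exp]
  have hF_log : ∀ d, (∀ i, 0 < d i) → F d = renyiObjectiveLog α S (fun i => log (d i)) :=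
    fun d hd => by simp only [← hF_exp, exp_log (hd _)]
  refine ⟨fun d hd i hi => ?_, ?_⟩
  · simp only [hF_log _ (hd _)]
    exact (tendsto_renyiObjectiveLog_comap_eval hα₀ hα₁ hS i).comp
      (tendsto_comap_iff.2 (tendsto_log_cocompact_of_tendsto_zero_or_atTop (hd · i) hi))
  · obtain ⟨u, hu⟩ := (continuous_renyiObjectiveLog hα₀.le hα₁ hS).exists_forall_le
      (tendsto_renyiObjectiveLog_cocompact hα₀ hα₁ hS)
    exact ⟨fun i => exp (u i), fun i => exp_pos _, fun d hd => by
      rw [hF_exp, hF_log d hd]; exact hu _⟩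
end
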